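/- arXiv:math/0301014 — 2 statements merged into one kernel-verified Lean document; each statement's English description precedes it below -/
import Mathlib

section
/- The level set {r ∈ (ℝ^+)^{n+1} : μ_1(r) = k_1 and μ_2(r) = k_2} is nonempty if and only if (-k_1/π)·e^{(4π/(n+1))k_2} ≥ n+1. -/
/-!
Fixing μ₁ and μ₂ amounts to fixing `S = ∑ rᵢ²` and `P = ∏ rᵢ`. AM–GM applied to the `rᵢ²` gives
`(n + 1) P^{2/(n+1)} ≤ S`. Conversely, let `a = P^{1/(n+1)}`. Replacing `r₀ = r₁ = a` by `a t`
and `a / t` in the constant vector `a` leaves the product unchanged and turns the sum of squares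
into `a² (t² + t⁻² + n - 1)`. As `t` grows from `1` to `∞`, this sum covers every value from
`(n + 1) a²` upwards.
-/

open Real Finset

lemma card_mul_prod_rpow_le_sum_sq {ι : Type*} [Fintype ι] [Nonempty ι] {r : ι → ℝ}
    (hr : ∀ i, 0 ≤ r i) :
    (Fintype.card ι : ℝ) * (∏ i, r i) ^ (2 / (Fintype.card ι : ℝ)) ≤ ∑ i, r i ^ 2 := by
  have hN : (0 : ℝ) < Fintype.card ι := by exact_mod_cast Fintype.card_pos
  have amgm := geom_mean_le_arith_mean univ (fun _ => (1 : ℝ)) (fun i => r i ^ 2)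
    (fun _ _ => zero_le_one) (by simpa using hN) (fun i _ => sq_nonneg (r i))
  simp only [rpow_one, one_mul, sum_const, card_univ, nsmul_eq_mul, mul_one] at amgm
  rwa [prod_pow, ← rpow_natCast, ← rpow_mul (prod_nonneg fun i _ => hr i), ← div_eq_mul_inv,
    le_div_iff₀ hN, mul_comm] at amgm

lemma exists_pos_add_inv_eq {M : ℝ} (hM : 2 ≤ M) : ∃ u > 0, u + u⁻¹ = M := by
  set d := √(M ^ 2 - 4)
  have hd : d ^ 2 = M ^ 2 - 4 := sq_sqrt (by nlinarith)
  have hd0 : 0 ≤ d := sqrt_nonneg _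
  refine ⟨(M + d) / 2, by positivity, ?_⟩
  have hinv : ((M + d) / 2)⁻¹ = (M - d) / 2 :=
    inv_eq_of_mul_eq_one_right (by linear_combination (-1 / 4 : ℝ) * hd)
  rw [hinv]
  ring

lemma exists_pos_sum_sq_eq_prod_eq (m : ℕ) {a S : ℝ} (ha : 0 < a)
    (h : (m + 2) * a ^ 2 ≤ S) :
    ∃ r : Fin (m + 2) → ℝ, (∀ i, 0 < r i) ∧ ∑ i, r i ^ 2 = S ∧ ∏ i, r i = a ^ (m + 2) := by
  obtain ⟨u, hu, hsum⟩ := exists_pos_add_inv_eq (M := S / a ^ 2 - m) (by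
    rw [le_sub_iff_add_le, le_div_iff₀ (by positivity)]; linarith)
  set t := √u
  have ht : 0 < t := sqrt_pos.mpr hu
  have ht2 : t ^ 2 = u := sq_sqrt hu.le
  refine ⟨Fin.cons (a * t) (Fin.cons (a / t) fun _ => a), ?_, ?_, ?_⟩
  · intro i
    refine Fin.cases ?_ (Fin.cases ?_ fun _ => ?_) i <;> simp <;> positivity
  · simp only [Fin.sum_univ_succ, Fin.cons_zero, Fin.cons_succ, sum_const, card_univ,
      Fintype.card_fin, nsmul_eq_mul]
    rw [mul_pow, div_pow, ht2]
    calc a ^ 2 * u + (a ^ 2 / u + m * a ^ 2) = a ^ 2 * (u + u⁻¹ + m) := by ring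
      _ = S := by rw [hsum, sub_add_cancel, mul_div_cancel₀ _ (by positivity)]
  · simp only [Fin.prod_univ_succ, Fin.cons_zero, Fin.cons_succ, prod_const, card_univ,
      Fintype.card_fin]
    field_simp
    ring

theorem exists_pos_sum_sq_eq_prod_eq_iff {n : ℕ} (hn : 1 ≤ n) {S P : ℝ} (hP : 0 < P) :
    (∃ r : Fin (n + 1) → ℝ, (∀ i, 0 < r i) ∧ ∑ i, r i ^ 2 = S ∧ ∏ i, r i = P) ↔
      (n + 1) * P ^ (2 / (n + 1 : ℝ)) ≤ S := by
  constructor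
  · rintro ⟨r, hr, rfl, rfl⟩
    simpa using card_mul_prod_rpow_le_sum_sq fun i => (hr i).le
  · intro h
    obtain ⟨m, rfl⟩ := Nat.exists_eq_add_of_le' hn
    set a := P ^ (1 / (m + 2 : ℝ))
    have ha : 0 < a := rpow_pos_of_pos hP _
    have ha2 : a ^ 2 = P ^ (2 / (m + 2 : ℝ)) := by
      rw [← rpow_natCast, ← rpow_mul hP.le]; push_cast; ring_nf
    have haN : a ^ (m + 2) = P := by
      rw [← rpow_natCast, ← rpow_mul hP.le]; push_cast
      rw [one_div_mul_cancel (by positivity), rpow_one]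
    obtain ⟨r, hr, hsum, hprod⟩ := exists_pos_sum_sq_eq_prod_eq m (S := S) ha (by
      push_cast at h; rwa [ha2, show (m + 2 : ℝ) = m + 1 + 1 by ring])
    exact ⟨r, hr, hsum, hprod.trans haN⟩

theorem stmt6_general (n : ℕ) (hn : 1 ≤ n) (k₁ k₂ : ℝ) :
    (∃ r : Fin (n + 1) → ℝ, (∀ i, 0 < r i) ∧
        -π * ∑ i, (r i) ^ 2 = k₁ ∧
        -(1 / (2 * π)) * Real.log (∏ i, r i) = k₂) ↔
      (-k₁ / π) * Real.exp ((4 * π / (n + 1)) * k₂) ≥ n + 1 := by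
  have hπ := pi_pos
  have hμ₁ (s : ℝ) : -π * s = k₁ ↔ s = -k₁ / π := by
    rw [eq_div_iff hπ.ne']
    constructor <;> intro <;> linarith
  have hμ₂ {p : ℝ} (hp : 0 < p) : -(1 / (2 * π)) * log p = k₂ ↔ p = exp (-(2 * π * k₂)) := by
    conv_rhs => rw [← exp_log hp, exp_eq_exp]
    constructor <;> intro h
    · field_simp at h; linarith
    · rw [h]; field_simp
  have hexp : exp (-(2 * π * k₂)) ^ (2 / (n + 1 : ℝ)) = (exp (4 * π / (n + 1) * k₂))⁻¹ := by
    rw [← exp_mul, ← exp_neg]; ring_nf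
  calc _ ↔ ∃ r : Fin (n + 1) → ℝ, (∀ i, 0 < r i) ∧
          ∑ i, r i ^ 2 = -k₁ / π ∧ ∏ i, r i = exp (-(2 * π * k₂)) :=
        exists_congr fun r => and_congr_right fun hr =>
          and_congr (hμ₁ _) (hμ₂ (prod_pos fun i _ => hr i))
    _ ↔ _ := by
      rw [exists_pos_sum_sq_eq_prod_eq_iff hn (exp_pos _), hexp, ← div_eq_mul_inv,
        div_le_iff₀ (exp_pos _), ge_iff_le]

/-- The level set { r ∈ (ℝ⁺)^{n+1} : μ₁(r) = k₁, μ₂(r) = k₂ } is nonempty iff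
(-k₁/π)·e^{(4π/(n+1)) k₂} ≥ n+1, where μ₁(r) = -π Σ r_i² and
μ₂(r) = -(1/(2π)) log(∏ r_i). -/
theorem stmt6 (n : ℕ) (hn : 1 ≤ n) (k₁ k₂ : ℝ) (hk₁ : k₁ < 0) :
    (∃ r : Fin (n + 1) → ℝ, (∀ i, 0 < r i) ∧
        -π * ∑ i, (r i) ^ 2 = k₁ ∧
        -(1 / (2 * π)) * Real.log (∏ i, r i) = k₂) ↔
      (-k₁ / π) * Real.exp ((4 * π / (n + 1)) * k₂) ≥ n + 1 :=
  stmt6_general n hn k₁ k₂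
end

section
/- If at a point r ∈ (ℝ^+)^{n+1} with μ_1(r) = k_1 and μ_2(r) = k_2 the differentials dμ_1 and dμ_2 are linearly dependent (i.e., dμ_1 ∧ dμ_2 = 0), then (-k_1/π)·e^{(4π/(n+1))k_2} = n+1. Consequently, if (-k_1/π)·e^{(4π/(n+1))k_2} > n+1 then (k_1,k_2) is a regular value of (μ_1,μ_2). -/
open Real BigOperators

/-!
Multiplying the dependence relation `a dμ₁ + b dμ₂ = 0` by `r i` gives
`2π a (r i)² = -b / (2π)` for every `i`, so (as `a = 0` would force `b = 0`) all the `r i` equal a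
common `t > 0`. Then `k₁ = -π (n+1) t²` and `k₂ = -((n+1)/(2π)) log t`, hence
`e^{(4π/(n+1)) k₂} = t⁻²` and `(-k₁/π) e^{(4π/(n+1)) k₂} = n + 1`.
-/

theorem eq_of_forall_mul_add_mul_inv_eq_zero {ι : Type*} {p q a b : ℝ} (hp : p ≠ 0) (hq : q ≠ 0)
    {r : ι → ℝ} (hr : ∀ i, 0 < r i) (hab : ¬(a = 0 ∧ b = 0))
    (h : ∀ i, a * (p * r i) + b * (q * (1 / r i)) = 0) (i j : ι) : r i = r j := by
  have hsq : ∀ i, a * p * r i ^ 2 = -(b * q) := fun i => by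
    have := h i
    field_simp [(hr i).ne'] at this
    linarith
  have ha : a ≠ 0 := by
    rintro rfl
    exact hab ⟨rfl, by simpa [hq] using hsq i⟩
  have hsq_eq : r i ^ 2 = r j ^ 2 :=
    mul_left_cancel₀ (mul_ne_zero ha hp) ((hsq i).trans (hsq j).symm)
  exact (pow_left_inj₀ (hr i).le (hr j).le two_ne_zero).1 hsq_eq

theorem neg_div_pi_mul_exp_eq_of_const (n : ℕ) {t : ℝ} (ht : 0 < t) :
    (-(-π * ∑ _i : Fin (n + 1), t ^ 2) / π) *
        exp ((4 * π / (n + 1)) * (-(1 / (2 * π)) * log (∏ _i : Fin (n + 1), t))) = n + 1 := by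
  have hexp : (4 * π / (n + 1)) * (-(1 / (2 * π)) * log (∏ _i : Fin (n + 1), t)) =
      -log (t ^ 2) := by
    simp only [Finset.prod_const, Finset.card_univ, Fintype.card_fin, log_pow]
    field_simp
    push_cast
    ring
  rw [hexp, exp_neg, exp_log (by positivity)]
  simp only [Finset.sum_const, Finset.card_univ, Fintype.card_fin, nsmul_eq_mul]
  field_simp [pi_ne_zero]
  push_cast
  ring

theorem stmt7_general (n : ℕ) (k₁ k₂ : ℝ)
    (r : Fin (n + 1) → ℝ) (hr : ∀ i, 0 < r i)
    (h₁ : -π * ∑ i, (r i) ^ 2 = k₁)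
    (h₂ : -(1 / (2 * π)) * Real.log (∏ i, r i) = k₂) :
    ((∃ a b : ℝ, ¬(a = 0 ∧ b = 0) ∧
        ∀ i, a * (-(2 * π) * r i) + b * (-(1 / (2 * π)) * (1 / r i)) = 0) →
      (-k₁ / π) * Real.exp ((4 * π / (n + 1)) * k₂) = n + 1) ∧
    ((-k₁ / π) * Real.exp ((4 * π / (n + 1)) * k₂) > n + 1 →
      ∀ a b : ℝ,
        (∀ i, a * (-(2 * π) * r i) + b * (-(1 / (2 * π)) * (1 / r i)) = 0) →
        a = 0 ∧ b = 0) := by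
  have dependent_imp : (∃ a b : ℝ, ¬(a = 0 ∧ b = 0) ∧
        ∀ i, a * (-(2 * π) * r i) + b * (-(1 / (2 * π)) * (1 / r i)) = 0) →
      (-k₁ / π) * Real.exp ((4 * π / (n + 1)) * k₂) = n + 1 := by
    rintro ⟨a, b, hab, hdep⟩
    have hconst : r = fun _ => r 0 := funext fun i =>
      eq_of_forall_mul_add_mul_inv_eq_zero (by simp [pi_ne_zero]) (by simp [pi_ne_zero])
        hr hab hdep i 0
    rw [← h₁, ← h₂, hconst]
    exact neg_div_pi_mul_exp_eq_of_const n (hr 0)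
  refine ⟨dependent_imp, fun hgt a b hdep => ?_⟩
  by_contra hab
  exact hgt.ne' (dependent_imp ⟨a, b, hab, hdep⟩)

/-- If at a point r of the level set μ₁ = k₁, μ₂ = k₂ the differentials
dμ₁ = -2π Σ r_i dr_i and dμ₂ = -(1/(2π)) Σ (1/r_i) dr_i are linearly
dependent, then (-k₁/π)·e^{(4π/(n+1)) k₂} = n+1.  Consequently, if
(-k₁/π)·e^{(4π/(n+1)) k₂} > n+1 then (k₁,k₂) is a regular value of (μ₁,μ₂):
the differentials are linearly independent at every point of the level set. -/
theorem stmt7 (n : ℕ) (hn : 1 ≤ n) (k₁ k₂ : ℝ)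
    (r : Fin (n + 1) → ℝ) (hr : ∀ i, 0 < r i)
    (h₁ : -π * ∑ i, (r i) ^ 2 = k₁)
    (h₂ : -(1 / (2 * π)) * Real.log (∏ i, r i) = k₂) :
    ((∃ a b : ℝ, ¬(a = 0 ∧ b = 0) ∧
        ∀ i, a * (-(2 * π) * r i) + b * (-(1 / (2 * π)) * (1 / r i)) = 0) →
      (-k₁ / π) * Real.exp ((4 * π / (n + 1)) * k₂) = n + 1) ∧
    ((-k₁ / π) * Real.exp ((4 * π / (n + 1)) * k₂) > n + 1 →
      ∀ a b : ℝ,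
        (∀ i, a * (-(2 * π) * r i) + b * (-(1 / (2 * π)) * (1 / r i)) = 0) →
        a = 0 ∧ b = 0) :=
  stmt7_general n k₁ k₂ r hr h₁ h₂
end
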